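/- Let M = V_{0,q,c} be a no-label Verma module (any c ∈ ℂ, any q ∈ ℂ). Then G_0Q_0v is nonzero, is annihilated by the positive operators, and satisfies G_0(G_0Q_0v) = 0 and Q_0(G_0Q_0v) = 0; moreover every Ψ ∈ M with L_0Ψ = 0, G_0Ψ = 0 and Q_0Ψ = 0 is proportional to G_0Q_0v. In particular, G_0Q_0v is (up to proportionality) the unique chiral singular vector of V_{0,q,c}. -/

import Mathlib

universe u

/-- A representation of the topological N=2 superconformal algebra with
central charge `c` on the complex vector space `M`. -/
structure TopN2 (c : ℂ) (M : Type u) [AddCommGroup M] [Module ℂ M] where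
  L : ℤ → Module.End ℂ M
  H : ℤ → Module.End ℂ M
  G : ℤ → Module.End ℂ M
  Q : ℤ → Module.End ℂ M
  hLL : ∀ m n : ℤ, L m * L n - L n * L m = ((m : ℂ) - (n : ℂ)) • L (m + n)
  hHH : ∀ m n : ℤ, H m * H n - H n * H m =
    (if m + n = 0 then c / 3 * (m : ℂ) else 0) • (1 : Module.End ℂ M)
  hLG : ∀ m n : ℤ, L m * G n - G n * L m = ((m : ℂ) - (n : ℂ)) • G (m + n)
  hHG : ∀ m n : ℤ, H m * G n - G n * H m = G (m + n)
  hLQ : ∀ m n : ℤ, L m * Q n - Q n * L m = (-(n : ℂ)) • Q (m + n)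
  hHQ : ∀ m n : ℤ, H m * Q n - Q n * H m = -(Q (m + n))
  hLH : ∀ m n : ℤ, L m * H n - H n * L m = (-(n : ℂ)) • H (m + n) +
    (if m + n = 0 then c / 6 * ((m : ℂ) ^ 2 + (m : ℂ)) else 0) • (1 : Module.End ℂ M)
  hGQ : ∀ m n : ℤ, G m * Q n + Q n * G m = (2 : ℂ) • L (m + n) + (-2 * (n : ℂ)) • H (m + n) +
    (if m + n = 0 then c / 3 * ((m : ℂ) ^ 2 + (m : ℂ)) else 0) • (1 : Module.End ℂ M)
  hGG : ∀ m n : ℤ, G m * G n + G n * G m = 0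
  hQQ : ∀ m n : ℤ, Q m * Q n + Q n * Q m = 0

/-- `Ψ` is annihilated by the positive operators. -/
def TopN2.AnnPos {c : ℂ} {M : Type u} [AddCommGroup M] [Module ℂ M]
    (A : TopN2 c M) (Ψ : M) : Prop :=
  ∀ k : ℤ, 1 ≤ k → A.L k Ψ = 0 ∧ A.H k Ψ = 0 ∧ A.G k Ψ = 0 ∧ A.Q k Ψ = 0

/-- Apply the operators `F (-a_j)` for the entries `a_j` of the list (read left
to right) to `w`. -/
def listApplyN2 {M : Type u} [AddCommGroup M] [Module ℂ M]
    (F : ℤ → Module.End ℂ M) (l : List ℕ) (w : M) : M :=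
  l.foldr (fun a x => F (-(a : ℤ)) x) w

/-- Apply `f` to `w` if `r = true`, corresponding to a factor `f^r`, `r ∈ {0,1}`. -/
def condApply {M : Type u} [AddCommGroup M] [Module ℂ M]
    (f : Module.End ℂ M) (r : Bool) (w : M) : M :=
  if r then f w else w

/-- Index of the standard basis of a no-label Verma module of the topological
N=2 algebra. -/
structure NLIndex : Type where
  ls : List ℕ
  hs : List ℕ
  gs : List ℕ
  ps : List ℕ
  k : ℕ
  r1 : Bool
  r2 : Bool
  r3 : Bool
  r4 : Bool
  hls : ls.Pairwise (· ≥ ·)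
  hls2 : ∀ x ∈ ls, 2 ≤ x
  hhs : hs.Pairwise (· ≥ ·)
  hhs2 : ∀ x ∈ hs, 1 ≤ x
  hgs : gs.Pairwise (· > ·)
  hgs2 : ∀ x ∈ gs, 2 ≤ x
  hps : ps.Pairwise (· > ·)
  hps2 : ∀ x ∈ ps, 2 ≤ x

/-- The basis vector
`L_{-l_a}···L_{-l_1} H_{-h_b}···H_{-h_1} G_{-g_d}···G_{-g_1} Q_{-p_e}···Q_{-p_1}
L_{-1}^k G_{-1}^{r_1} Q_{-1}^{r_2} G_0^{r_4} Q_0^{r_3} v` of a no-label Verma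
module. -/
def NLIndex.vec {c : ℂ} {M : Type u} [AddCommGroup M] [Module ℂ M]
    (A : TopN2 c M) (v : M) (i : NLIndex) : M :=
  listApplyN2 A.L i.ls <| listApplyN2 A.H i.hs <| listApplyN2 A.G i.gs <|
    listApplyN2 A.Q i.ps <| ((A.L (-1)) ^ i.k) <|
      condApply (A.G (-1)) i.r1 <| condApply (A.Q (-1)) i.r2 <|
        condApply (A.G 0) i.r4 <| condApply (A.Q 0) i.r3 v

/-- A no-label Verma module `V_{0,q,c}` of the topological N=2 superconformal
algebra. -/
structure NLVerma (c q : ℂ) (M : Type u) [AddCommGroup M] [Module ℂ M]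
    extends TopN2 c M where
  v : M
  hv0 : L 0 v = 0
  hvH : H 0 v = q • v
  hvann : ∀ k : ℤ, 1 ≤ k → L k v = 0 ∧ H k v = 0 ∧ G k v = 0 ∧ Q k v = 0
  b : Module.Basis NLIndex ℂ M
  hb : ∀ i : NLIndex, b i = i.vec toTopN2 v

/-! Every basis vector is an `L₀`-eigenvector whose eigenvalue, its level, is the total mode
number of the creation operators applied to `v`; hence `ker L₀` is spanned by the four level-zero
basis vectors `v, Q₀v, G₀v, G₀Q₀v`. There `G₀² = Q₀² = 0` and `{G₀, Q₀} = 2L₀ = 0`, so `G₀Ψ = 0`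
kills the coefficients of `v` and `Q₀v`, after which `Q₀Ψ` is a multiple of `G₀Q₀v ≠ 0`, which
kills the coefficient of `G₀v`. Annihilation by the positive modes passes from `v` to `Q₀v` and
`G₀v` because the (anti)commutator of a positive mode with a zero mode is a combination of
positive modes. -/

namespace Module.Basis

variable {ι R M : Type*} [CommSemiring R] [AddCommMonoid M] [Module R M]

lemma repr_apply_eq_mul_of_apply_eq_smul (b : Basis ι R M) {T : Module.End R M} {μ : ι → R}
    (hT : ∀ i, T (b i) = μ i • b i) (x : M) (i : ι) :
    b.repr (T x) i = μ i * b.repr x i := by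
  classical
  have hcoord : b.coord i ∘ₗ T = μ i • b.coord i := b.ext fun j => by
    by_cases hji : j = i
    · subst hji; simp [hT]
    · simp [hT, hji]
  simpa using LinearMap.congr_fun hcoord x

lemma mem_span_image_of_apply_eq_zero [NoZeroDivisors R] (b : Basis ι R M)
    {T : Module.End R M} {μ : ι → R} (hT : ∀ i, T (b i) = μ i • b i) {x : M} (hx : T x = 0) :
    x ∈ Submodule.span R (b '' {i | μ i = 0}) := by
  rw [b.mem_span_image]
  intro i hi
  have h := b.repr_apply_eq_mul_of_apply_eq_smul hT x i
  rw [hx, map_zero, Finsupp.zero_apply, eq_comm, mul_eq_zero] at h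
  exact h.resolve_right (Finsupp.mem_support_iff.mp hi)

end Module.Basis

lemma List.eq_nil_of_sum_eq_zero_of_one_le {l : List ℕ} (hpos : ∀ x ∈ l, 1 ≤ x) (h : l.sum = 0) :
    l = [] :=
  List.eq_nil_iff_forall_not_mem.mpr fun x hx => by
    have := List.sum_eq_zero_iff.mp h x hx
    have := hpos x hx
    omega

lemma listApplyN2_cons {M : Type u} [AddCommGroup M] [Module ℂ M]
    (F : ℤ → Module.End ℂ M) (a : ℕ) (l : List ℕ) (w : M) :
    listApplyN2 F (a :: l) w = F (-(a : ℤ)) (listApplyN2 F l w) :=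
  rfl

lemma condApply_eq_pow {M : Type u} [AddCommGroup M] [Module ℂ M]
    (f : Module.End ℂ M) (r : Bool) (w : M) : condApply f r w = (f ^ r.toNat) w := by
  cases r <;> simp [condApply]

namespace TopN2

variable {c : ℂ} {M : Type u} [AddCommGroup M] [Module ℂ M] (A : TopN2 c M)

lemma L_zero_apply_of_comm {f : Module.End ℂ M} {δ : ℂ} (hf : A.L 0 * f - f * A.L 0 = δ • f)
    {w : M} {μ : ℂ} (hw : A.L 0 w = μ • w) : A.L 0 (f w) = (μ + δ) • f w := by
  have h := LinearMap.congr_fun hf w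
  simp only [LinearMap.sub_apply, Module.End.mul_apply, LinearMap.smul_apply, hw,
    map_smul] at h
  rw [add_smul, ← h]
  abel

lemma L_zero_pow_apply_of_comm {f : Module.End ℂ M} {δ : ℂ} (hf : A.L 0 * f - f * A.L 0 = δ • f)
    {w : M} {μ : ℂ} (hw : A.L 0 w = μ • w) (k : ℕ) :
    A.L 0 ((f ^ k) w) = (μ + k * δ) • (f ^ k) w := by
  induction k with
  | zero => simpa using hw
  | succ k ih =>
    rw [pow_succ', Module.End.mul_apply, A.L_zero_apply_of_comm hf ih]
    push_cast
    ring_nf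

lemma L_zero_listApplyN2 {F : ℤ → Module.End ℂ M}
    (hF : ∀ n : ℤ, A.L 0 * F n - F n * A.L 0 = (-(n : ℂ)) • F n) (l : List ℕ)
    {w : M} {μ : ℂ} (hw : A.L 0 w = μ • w) :
    A.L 0 (listApplyN2 F l w) = (μ + l.sum) • listApplyN2 F l w := by
  induction l with
  | nil => simpa [listApplyN2] using hw
  | cons a l ih =>
    rw [listApplyN2_cons, A.L_zero_apply_of_comm (hF _) ih, List.sum_cons]
    push_cast
    ring_nf

lemma L_zero_comm_L (n : ℤ) : A.L 0 * A.L n - A.L n * A.L 0 = (-(n : ℂ)) • A.L n := by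
  simpa using A.hLL 0 n

lemma L_zero_comm_H (n : ℤ) : A.L 0 * A.H n - A.H n * A.L 0 = (-(n : ℂ)) • A.H n := by
  simpa using A.hLH 0 n

lemma L_zero_comm_G (n : ℤ) : A.L 0 * A.G n - A.G n * A.L 0 = (-(n : ℂ)) • A.G n := by
  simpa using A.hLG 0 n

lemma L_zero_comm_Q (n : ℤ) : A.L 0 * A.Q n - A.Q n * A.L 0 = (-(n : ℂ)) • A.Q n := by
  simpa using A.hLQ 0 n

lemma G_zero_G_zero_apply (x : M) : A.G 0 (A.G 0 x) = 0 := by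
  have h := LinearMap.congr_fun (A.hGG 0 0) x
  rw [LinearMap.add_apply, Module.End.mul_apply, ← two_smul ℂ] at h
  exact (smul_eq_zero.mp h).resolve_left two_ne_zero

lemma Q_zero_Q_zero_apply (x : M) : A.Q 0 (A.Q 0 x) = 0 := by
  have h := LinearMap.congr_fun (A.hQQ 0 0) x
  rw [LinearMap.add_apply, Module.End.mul_apply, ← two_smul ℂ] at h
  exact (smul_eq_zero.mp h).resolve_left two_ne_zero

lemma G_zero_Q_zero_apply_add (x : M) :
    A.G 0 (A.Q 0 x) + A.Q 0 (A.G 0 x) = (2 : ℂ) • A.L 0 x := by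
  simpa using LinearMap.congr_fun (A.hGQ 0 0) x

lemma Q_zero_G_zero_apply_of_L_zero {v : M} (hv : A.L 0 v = 0) :
    A.Q 0 (A.G 0 v) = -A.G 0 (A.Q 0 v) := by
  rw [eq_neg_iff_add_eq_zero, add_comm, A.G_zero_Q_zero_apply_add, hv, smul_zero]

lemma Q_zero_G_zero_Q_zero_apply_of_L_zero {v : M} (hv : A.L 0 v = 0) :
    A.Q 0 (A.G 0 (A.Q 0 v)) = 0 := by
  have hQv : A.L 0 (A.Q 0 v) = 0 := by
    simpa [hv] using A.L_zero_apply_of_comm (A.L_zero_comm_Q 0) (μ := 0) (by simp [hv])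
  rw [A.Q_zero_G_zero_apply_of_L_zero hQv, A.Q_zero_Q_zero_apply, map_zero, neg_zero]

lemma chiral_combination_eq_smul {v : M} (hv : A.L 0 v = 0)
    (hind : LinearIndependent ℂ ![A.G 0 v, A.G 0 (A.Q 0 v)]) {a b c' d : ℂ}
    (hG : A.G 0 (a • v + b • A.Q 0 v + c' • A.G 0 v + d • A.G 0 (A.Q 0 v)) = 0)
    (hQ : A.Q 0 (a • v + b • A.Q 0 v + c' • A.G 0 v + d • A.G 0 (A.Q 0 v)) = 0) :
    a • v + b • A.Q 0 v + c' • A.G 0 v + d • A.G 0 (A.Q 0 v) = d • A.G 0 (A.Q 0 v) := by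
  simp only [map_add, map_smul, G_zero_G_zero_apply, smul_zero, add_zero] at hG
  obtain ⟨rfl, rfl⟩ := LinearIndependent.pair_iff.mp hind a b hG
  simp only [map_add, map_smul, A.Q_zero_G_zero_apply_of_L_zero hv,
    A.Q_zero_G_zero_Q_zero_apply_of_L_zero hv, zero_smul, smul_zero, zero_add, add_zero, smul_neg,
    neg_eq_zero] at hQ
  obtain rfl := (smul_eq_zero.mp hQ).resolve_right (hind.ne_zero 1)
  simp

variable {A}

lemma AnnPos.Q_zero {Ψ : M} (hΨ : A.AnnPos Ψ) : A.AnnPos (A.Q 0 Ψ) := by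
  intro k hk
  obtain ⟨hL, hH, hG, hQ⟩ := hΨ k hk
  have hk0 : k ≠ 0 := by omega
  refine ⟨?_, ?_, ?_, ?_⟩
  · simpa [hL] using LinearMap.congr_fun (A.hLQ k 0) Ψ
  · simpa [hH, hQ] using LinearMap.congr_fun (A.hHQ k 0) Ψ
  · simpa [hk0, hL, hH, hG] using LinearMap.congr_fun (A.hGQ k 0) Ψ
  · simpa [hQ] using LinearMap.congr_fun (A.hQQ k 0) Ψ

lemma AnnPos.G_zero {Ψ : M} (hΨ : A.AnnPos Ψ) : A.AnnPos (A.G 0 Ψ) := by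
  intro k hk
  obtain ⟨hL, hH, hG, hQ⟩ := hΨ k hk
  have hk0 : k ≠ 0 := by omega
  refine ⟨?_, ?_, ?_, ?_⟩
  · simpa [hL, hG] using LinearMap.congr_fun (A.hLG k 0) Ψ
  · simpa [hH, hG] using LinearMap.congr_fun (A.hHG k 0) Ψ
  · simpa [hG] using LinearMap.congr_fun (A.hGG k 0) Ψ
  · simpa [hk0, hL, hH, hQ] using LinearMap.congr_fun (A.hGQ 0 k) Ψ

end TopN2

def NLIndex.level (i : NLIndex) : ℕ :=
  i.ls.sum + i.hs.sum + i.gs.sum + i.ps.sum + i.k + i.r1.toNat + i.r2.toNat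

lemma TopN2.L_zero_vec {c : ℂ} {M : Type u} [AddCommGroup M] [Module ℂ M] (A : TopN2 c M)
    {v : M} (hv : A.L 0 v = 0) (i : NLIndex) :
    A.L 0 (i.vec A v) = (i.level : ℂ) • i.vec A v := by
  have h := A.L_zero_listApplyN2 A.L_zero_comm_L i.ls <|
    A.L_zero_listApplyN2 A.L_zero_comm_H i.hs <|
    A.L_zero_listApplyN2 A.L_zero_comm_G i.gs <|
    A.L_zero_listApplyN2 A.L_zero_comm_Q i.ps <|
    A.L_zero_pow_apply_of_comm (A.L_zero_comm_L (-1)) (k := i.k) <|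
    A.L_zero_pow_apply_of_comm (A.L_zero_comm_G (-1)) (k := i.r1.toNat) <|
    A.L_zero_pow_apply_of_comm (A.L_zero_comm_Q (-1)) (k := i.r2.toNat) <|
    A.L_zero_pow_apply_of_comm (A.L_zero_comm_G 0) (k := i.r4.toNat) <|
    A.L_zero_pow_apply_of_comm (A.L_zero_comm_Q 0) (k := i.r3.toNat) (w := v) (μ := 0)
      (by simp [hv])
  simp only [NLIndex.vec, condApply_eq_pow]
  rw [h, NLIndex.level]
  push_cast
  ring_nf

def NLIndex.zero (r3 r4 : Bool) : NLIndex :=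
  ⟨[], [], [], [], 0, false, false, r3, r4, .nil, by simp, .nil, by simp, .nil, by simp, .nil,
    by simp⟩

lemma NLIndex.setOf_level_eq_zero :
    {i : NLIndex | i.level = 0} = Set.range fun p : Bool × Bool => NLIndex.zero p.1 p.2 := by
  ext ⟨ls, hs, gs, ps, k, r1, r2, r3, r4, -, hls2, -, hhs2, -, hgs2, -, hps2⟩
  refine ⟨fun h => ⟨(r3, r4), ?_⟩, ?_⟩
  · simp only [level, Nat.add_eq_zero_iff, Bool.toNat_eq_zero] at h
    obtain ⟨⟨⟨⟨⟨⟨hl, hh⟩, hg⟩, hp⟩, rfl⟩, rfl⟩, rfl⟩ := h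
    have one_le {l : List ℕ} (h2 : ∀ x ∈ l, 2 ≤ x) : ∀ x ∈ l, 1 ≤ x :=
      fun x hx => (h2 x hx).trans' one_le_two
    obtain rfl := List.eq_nil_of_sum_eq_zero_of_one_le (one_le hls2) hl
    obtain rfl := List.eq_nil_of_sum_eq_zero_of_one_le hhs2 hh
    obtain rfl := List.eq_nil_of_sum_eq_zero_of_one_le (one_le hgs2) hg
    obtain rfl := List.eq_nil_of_sum_eq_zero_of_one_le (one_le hps2) hp
    rfl
  · rintro ⟨p, hp⟩
    rw [← hp]
    rfl

namespace NLVerma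

variable {c q : ℂ} {M : Type u} [AddCommGroup M] [Module ℂ M] (V : NLVerma c q M)

lemma L_zero_b (i : NLIndex) : V.L 0 (V.b i) = (i.level : ℂ) • V.b i := by
  rw [V.hb]
  exact V.L_zero_vec V.hv0 i

lemma b_zero (r3 r4 : Bool) :
    V.b (NLIndex.zero r3 r4) = condApply (V.G 0) r4 (condApply (V.Q 0) r3 V.v) := by
  rw [V.hb]
  rfl

lemma exists_eq_of_L_zero_eq_zero {Ψ : M} (hΨ : V.L 0 Ψ = 0) :
    ∃ a b c' d : ℂ, Ψ = a • V.v + b • V.Q 0 V.v + c' • V.G 0 V.v + d • V.G 0 (V.Q 0 V.v) := by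
  have hspan := V.b.mem_span_image_of_apply_eq_zero V.L_zero_b hΨ
  simp only [Nat.cast_eq_zero, NLIndex.setOf_level_eq_zero, ← Set.range_comp] at hspan
  obtain ⟨f, rfl⟩ := (Submodule.mem_span_range_iff_exists_fun ℂ).mp hspan
  refine ⟨f (false, false), f (true, false), f (false, true), f (true, true), ?_⟩
  simp only [Fintype.sum_prod_type, Fintype.sum_bool, Function.comp_apply, b_zero, condApply]
  ac_rfl

lemma linearIndependent_G_zero :
    LinearIndependent ℂ ![V.G 0 V.v, V.G 0 (V.Q 0 V.v)] := by
  have hinj : Function.Injective ![NLIndex.zero false true, NLIndex.zero true true] := by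
    intro i j hij
    have := congrArg NLIndex.r3 hij
    fin_cases i <;> fin_cases j <;> simp_all [NLIndex.zero]
  convert V.b.linearIndependent.comp _ hinj using 1
  ext i
  fin_cases i <;> simp [b_zero, condApply]

end NLVerma

/-- in a no-label Verma module, `G₀Q₀v` is (up to
proportionality) the unique chiral singular vector. -/
theorem nlVerma_unique_chiral_singular {c q : ℂ} {M : Type u}
    [AddCommGroup M] [Module ℂ M] (V : NLVerma c q M) :
    V.G 0 (V.Q 0 V.v) ≠ 0 ∧
    V.toTopN2.AnnPos (V.G 0 (V.Q 0 V.v)) ∧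
    V.G 0 (V.G 0 (V.Q 0 V.v)) = 0 ∧
    V.Q 0 (V.G 0 (V.Q 0 V.v)) = 0 ∧
    (∀ Ψ : M, V.L 0 Ψ = 0 → V.G 0 Ψ = 0 → V.Q 0 Ψ = 0 →
      ∃ α : ℂ, Ψ = α • (V.G 0 (V.Q 0 V.v))) := by
  have hind := V.linearIndependent_G_zero
  have hv : V.toTopN2.AnnPos V.v := V.hvann
  refine ⟨by simpa using hind.ne_zero 1, hv.Q_zero.G_zero, V.G_zero_G_zero_apply _,
    V.Q_zero_G_zero_Q_zero_apply_of_L_zero V.hv0, fun Ψ hL hG hQ => ?_⟩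
  obtain ⟨a, b, c', d, rfl⟩ := V.exists_eq_of_L_zero_eq_zero hL
  exact ⟨d, V.chiral_combination_eq_smul V.hv0 hind hG hQ⟩
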